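/- arXiv:1611.08683 — 4 statements merged into one kernel-verified Lean document; each statement's English description precedes it below -/
import Mathlib

section
/- Let (X,ρ) be a metric space, let f : [0,∞) → [0,∞) be an unbounded modulus and let (A_k) be a sequence in CL(X). If A, B ∈ CL(X) satisfy [WS^f]-lim A_k = A and [WS^f]-lim A_k = B, then A = B; i.e., the f-Wijsman statistical limit is unique when it exists. -/
/-!
If `A ≠ B` are closed and nonempty, some `x` has `d(x,A) ≠ d(x,B)`. For `ε` half the gap, by the
triangle inequality every index `k` lies in one of the two exceptional sets, so their counts up to
`n` add up to at least `n + 1`. Monotonicity and subadditivity of `f` then force the two `f`-density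
ratios to sum to at least `1`, so they cannot both tend to `0`.
-/

open Filter Metric Set
open scoped Classical

/-- A modulus: `f : [0,∞) → [0,∞)` with `f x = 0 ↔ x = 0`, subadditive,
increasing, and continuous (all on `[0,∞)`). -/
def IsModulus (f : ℝ → ℝ) : Prop :=
  (∀ x : ℝ, 0 ≤ x → 0 ≤ f x) ∧
  (∀ x : ℝ, 0 ≤ x → (f x = 0 ↔ x = 0)) ∧
  (∀ x y : ℝ, 0 ≤ x → 0 ≤ y → f (x + y) ≤ f x + f y) ∧
  MonotoneOn f (Set.Ici 0) ∧
  ContinuousOn f (Set.Ici 0)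

/-- `f` is unbounded on `[0,∞)`. -/
def IsUnboundedOn (f : ℝ → ℝ) : Prop := ∀ M : ℝ, ∃ x : ℝ, 0 ≤ x ∧ M < f x

/-- The number of elements `k ≤ n` with `k ∈ K`. -/
noncomputable def countLe (K : Set ℕ) (n : ℕ) : ℕ := Nat.card {k : ℕ | k ≤ n ∧ k ∈ K}

/-- `K ⊆ ℕ` has `f`-density `d`: `lim_n f(|{k ≤ n : k ∈ K}|)/f(n) = d`. -/
def HasFDensity (f : ℝ → ℝ) (K : Set ℕ) (d : ℝ) : Prop :=
  Tendsto (fun n : ℕ => f (countLe K n : ℝ) / f (n : ℝ)) atTop (nhds d)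

/-- `K ⊆ ℕ` has natural density `d`: `lim_n |{k ≤ n : k ∈ K}|/n = d`. -/
def HasNatDensity (K : Set ℕ) (d : ℝ) : Prop :=
  Tendsto (fun n : ℕ => (countLe K n : ℝ) / (n : ℝ)) atTop (nhds d)

/-- Wijsman convergence: `d(x, A_k) → d(x, A)` for every `x`. -/
def WijsmanConvTo {X : Type*} [MetricSpace X] (Aseq : ℕ → Set X) (A : Set X) : Prop :=
  ∀ x : X, Tendsto (fun k : ℕ => infDist x (Aseq k)) atTop (nhds (infDist x A))

/-- Wijsman statistical convergence (with respect to the natural density). -/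
def WijsmanStatConvTo {X : Type*} [MetricSpace X] (Aseq : ℕ → Set X) (A : Set X) : Prop :=
  ∀ x : X, ∀ ε : ℝ, 0 < ε →
    HasNatDensity {k : ℕ | ε ≤ |infDist x (Aseq k) - infDist x A|} 0

/-- `f`-Wijsman statistical convergence: `[WS^f]-lim A_k = A`. -/
def FWijsmanStatConvTo (f : ℝ → ℝ) {X : Type*} [MetricSpace X]
    (Aseq : ℕ → Set X) (A : Set X) : Prop :=
  ∀ x : X, ∀ ε : ℝ, 0 < ε →
    HasFDensity f {k : ℕ | ε ≤ |infDist x (Aseq k) - infDist x A|} 0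

/-- Wijsman boundedness: `sup_k d(x, A_k) < ∞` for every `x`. -/
def WijsmanBounded {X : Type*} [MetricSpace X] (Aseq : ℕ → Set X) : Prop :=
  ∀ x : X, ∃ M : ℝ, ∀ k : ℕ, infDist x (Aseq k) ≤ M

/-- Wijsman Cesàro summability to `A`. -/
def WijsmanCesaroTo {X : Type*} [MetricSpace X] (Aseq : ℕ → Set X) (A : Set X) : Prop :=
  ∀ x : X, Tendsto (fun n : ℕ => (∑ k ∈ Finset.range n, infDist x (Aseq k)) / (n : ℝ))
    atTop (nhds (infDist x A))

/-- Wijsman strong Cesàro summability to `A` with respect to a modulus `f`: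
`[Ww^f]-lim A_k = A`. -/
def WijsmanStrongCesaroTo (f : ℝ → ℝ) {X : Type*} [MetricSpace X]
    (Aseq : ℕ → Set X) (A : Set X) : Prop :=
  ∀ x : X, Tendsto
    (fun n : ℕ => (∑ k ∈ Finset.range n, f |infDist x (Aseq k) - infDist x A|) / (n : ℝ))
    atTop (nhds 0)

/-- A slowly varying modulus: `lim_{x→∞} f(ax)/f(x) = 1` for every `a > 0`. -/
def SlowlyVaryingOn (f : ℝ → ℝ) : Prop :=
  ∀ a : ℝ, 0 < a → Tendsto (fun x : ℝ => f (a * x) / f x) atTop (nhds 1)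

lemma countLe_eq_card_filter (K : Set ℕ) (n : ℕ) :
    countLe K n = ((Finset.range (n + 1)).filter (· ∈ K)).card := by
  rw [countLe, ← Nat.card_eq_finsetCard]
  congr
  ext k
  simp [le_iff_eq_or_lt]

lemma succ_le_countLe_add_countLe {K L : Set ℕ} (hKL : K ∪ L = univ) (n : ℕ) :
    n + 1 ≤ countLe K n + countLe L n := by
  rw [countLe_eq_card_filter, countLe_eq_card_filter]
  calc n + 1 = ((Finset.range (n + 1)).filter (· ∈ K ∪ L)).card := by simp [hKL]
    _ ≤ _ := by
      simp only [Set.mem_union, Finset.filter_or]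
      exact Finset.card_union_le _ _

namespace IsModulus

variable {f : ℝ → ℝ}

lemma pos (hf : IsModulus f) {x : ℝ} (hx : 0 < x) : 0 < f x :=
  (hf.1 x hx.le).lt_of_ne fun h => hx.ne' ((hf.2.1 x hx.le).1 h.symm)

lemma one_le_div_add_div (hf : IsModulus f) {a b x : ℝ} (ha : 0 ≤ a) (hb : 0 ≤ b)
    (hx : 0 < x) (hxab : x ≤ a + b) : 1 ≤ f a / f x + f b / f x := by
  rw [← add_div, one_le_div (hf.pos hx)]
  calc f x ≤ f (a + b) := hf.2.2.2.1 hx.le (add_nonneg ha hb) hxab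
    _ ≤ f a + f b := hf.2.2.1 a b ha hb

lemma union_ne_univ_of_hasFDensity_zero (hf : IsModulus f) {K L : Set ℕ} (hK : HasFDensity f K 0) (hL : HasFDensity f L 0) : K ∪ L ≠ univ := by
  intro hKL
  have hle : ∀ᶠ n : ℕ in atTop,
      1 ≤ f (countLe K n) / f n + f (countLe L n) / f n := by
    filter_upwards [eventually_ge_atTop 1] with n hn
    have hcount := (succ_le_countLe_add_countLe hKL n).trans' n.le_succ
    exact hf.one_le_div_add_div (Nat.cast_nonneg _) (Nat.cast_nonneg _)
      (by exact_mod_cast hn) (by exact_mod_cast hcount)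
  have := ge_of_tendsto (by simpa using hK.add hL) hle
  norm_num at this

end IsModulus

lemma le_abs_sub_or_le_abs_sub {a b c ε : ℝ} (h : 2 * ε ≤ |b - c|) :
    ε ≤ |a - b| ∨ ε ≤ |a - c| := by
  by_contra! hlt
  have := abs_sub_le b a c
  rw [abs_sub_comm b a] at this
  linarith [hlt.1, hlt.2]

lemma Metric.exists_infDist_ne_of_ne {X : Type*} [MetricSpace X] {A B : Set X}
    (hA : A.Nonempty) (hAcl : IsClosed A) (hB : B.Nonempty) (hBcl : IsClosed B) (hAB : A ≠ B) :
    ∃ x, infDist x A ≠ infDist x B := by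
  by_contra! h
  exact hAB <| Set.ext fun x => by
    rw [hAcl.mem_iff_infDist_zero hA, hBcl.mem_iff_infDist_zero hB, h x]

theorem stmt2_general {X : Type*} [MetricSpace X] (f : ℝ → ℝ)
    (hf : IsModulus f)
    (A B : Set X) (hA : A.Nonempty) (hAcl : IsClosed A)
    (hB : B.Nonempty) (hBcl : IsClosed B)
    (Aseq : ℕ → Set X)
    (hfA : FWijsmanStatConvTo f Aseq A) (hfB : FWijsmanStatConvTo f Aseq B) :
    A = B := by
  by_contra hAB
  obtain ⟨x, hx⟩ := exists_infDist_ne_of_ne hA hAcl hB hBcl hAB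
  set ε := |infDist x A - infDist x B| / 2
  have hε : 0 < ε := by have := sub_ne_zero.mpr hx; positivity
  refine hf.union_ne_univ_of_hasFDensity_zero (hfA x ε hε) (hfB x ε hε) ?_
  exact Set.eq_univ_of_forall fun k => le_abs_sub_or_le_abs_sub (by simp only [ε]; linarith)

/-- The `f`-Wijsman statistical limit is unique when it exists. -/
theorem stmt2 {X : Type*} [MetricSpace X] (f : ℝ → ℝ)
    (hf : IsModulus f) (hfu : IsUnboundedOn f)
    (A B : Set X) (hA : A.Nonempty) (hAcl : IsClosed A)
    (hB : B.Nonempty) (hBcl : IsClosed B)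
    (Aseq : ℕ → Set X) (hAseq : ∀ k, (Aseq k).Nonempty ∧ IsClosed (Aseq k))
    (hfA : FWijsmanStatConvTo f Aseq A) (hfB : FWijsmanStatConvTo f Aseq B) :
    A = B :=
  stmt2_general f hf A B hA hAcl hB hBcl Aseq hfA hfB
end

section
/- Let (X,ρ) be a metric space, let (A_k) be a sequence in CL(X) and let A ∈ CL(X). Then the following statements are equivalent: (i) (A_k) is Wijsman convergent to A; (ii) [WS^f]-lim A_k = A holds for every unbounded modulus f; (iii) [WS^f]-lim A_k = A holds for every unbounded, concave, slowly varying modulus f. -/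
open Filter Metric Set
open scoped Classical

/-!
Wijsman convergence at `x` says exactly that every exceptional set
`{k | ε ≤ |d(x, A_k) - d(x, A)|}` is finite, and a finite set has `f`-density zero for every
unbounded modulus `f`. Conversely, given an infinite `K ⊆ ℕ`, choose breakpoints
`0 = t 0 < t 1 < ⋯` growing so fast that `K` has at least `t m` elements up to `t (m + 1)`,
and let `f` be the piecewise linear function with `f (t m) = m`. The rapid growth makes `f`
a concave, unbounded, slowly varying modulus, while `f (|K ∩ [0, t (m + 1)]|) / f (t (m + 1))`
is at least `m / (m + 1)`, so `K` does not have `f`-density zero.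
-/

open Topology

lemma countLe_eq_ncard (K : Set ℕ) (n : ℕ) : countLe K n = {k | k ≤ n ∧ k ∈ K}.ncard :=
  Nat.card_coe_set_eq _

lemma countLe_mono (K : Set ℕ) : Monotone (countLe K) := fun n m hnm => by
  simp only [countLe_eq_ncard]
  exact ncard_le_ncard (fun k hk => ⟨hk.1.trans hnm, hk.2⟩)
    ((finite_Iic m).subset fun _ hk => hk.1)

lemma countLe_le_ncard {K : Set ℕ} (hK : K.Finite) (n : ℕ) : countLe K n ≤ K.ncard := by
  rw [countLe_eq_ncard]
  exact ncard_le_ncard (fun _ hk => hk.2) hK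

lemma Set.Infinite.exists_le_countLe {K : Set ℕ} (hK : K.Infinite) (m : ℕ) :
    ∃ n, m ≤ countLe K n := by
  obtain ⟨S, hSK, rfl⟩ := hK.exists_subset_card_eq m
  obtain ⟨n, hn⟩ := S.exists_le
  refine ⟨n, ?_⟩
  rw [countLe_eq_ncard, ← ncard_coe_finset]
  exact ncard_le_ncard (fun k hk => ⟨hn k hk, hSK hk⟩) ((finite_Iic n).subset fun _ hk => hk.1)

lemma IsModulus.tendsto_natCast_atTop {f : ℝ → ℝ} (hf : IsModulus f) (hu : IsUnboundedOn f) :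
    Tendsto (fun n : ℕ => f n) atTop atTop := by
  refine tendsto_atTop.2 fun M => ?_
  obtain ⟨x, hx, hMx⟩ := hu M
  filter_upwards [eventually_ge_atTop ⌈x⌉₊] with n hn
  exact hMx.le.trans <|
    hf.2.2.2.1 hx (mem_Ici.2 n.cast_nonneg) ((Nat.le_ceil x).trans (mod_cast hn))

lemma hasFDensity_zero_of_finite {f : ℝ → ℝ} (hf : IsModulus f) (hu : IsUnboundedOn f)
    {K : Set ℕ} (hK : K.Finite) : HasFDensity f K 0 := by
  have hfn := hf.tendsto_natCast_atTop hu
  refine tendsto_of_tendsto_of_tendsto_of_le_of_le' tendsto_const_nhds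
    (tendsto_const_nhds (x := f K.ncard) |>.div_atTop hfn) ?_ ?_ <;>
    filter_upwards [hfn.eventually_gt_atTop 0] with n hn
  · exact div_nonneg (hf.1 _ (Nat.cast_nonneg _)) hn.le
  · gcongr
    exact hf.2.2.2.1 (mem_Ici.2 (Nat.cast_nonneg _)) (mem_Ici.2 (Nat.cast_nonneg _))
      (mod_cast countLe_le_ncard hK n)

lemma tendsto_atTop_nhds_iff_finite {u : ℕ → ℝ} {L : ℝ} :
    Tendsto u atTop (𝓝 L) ↔ ∀ ε > 0, {k | ε ≤ |u k - L|}.Finite := by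
  simp only [← Nat.cofinite_eq_atTop, Metric.tendsto_nhds, eventually_cofinite, Real.dist_eq,
    not_lt]

lemma wijsmanConvTo_iff_finite {X : Type*} [MetricSpace X] {Aseq : ℕ → Set X} {A : Set X} :
    WijsmanConvTo Aseq A ↔
      ∀ x, ∀ ε > 0, {k | ε ≤ |infDist x (Aseq k) - infDist x A|}.Finite := by
  simp only [WijsmanConvTo, tendsto_atTop_nhds_iff_finite]

lemma tendsto_div_nhds_one_of_abs_sub_le {α : Type*} {l : Filter α} {g h : α → ℝ}
    (hg : Tendsto g l atTop) {C : ℝ} (hC : ∀ᶠ x in l, |h x - g x| ≤ C) :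
    Tendsto (fun x => h x / g x) l (𝓝 1) := by
  have hquot : Tendsto (fun x => (h x - g x) / g x) l (𝓝 0) := by
    refine squeeze_zero_norm' ?_ ((tendsto_const_nhds (x := C)).div_atTop hg)
    filter_upwards [hC, hg.eventually_gt_atTop 0] with x hx hgx
    rw [Real.norm_eq_abs, abs_div, abs_of_pos hgx]
    gcongr
  simpa using (hquot.const_add 1).congr' <| (hg.eventually_gt_atTop 0).mono fun x hgx => by
    field_simp
    ring

lemma ConcaveOn.mul_le_map_mul {f : ℝ → ℝ} (hf : ConcaveOn ℝ (Ici 0) f) (h0 : 0 ≤ f 0)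
    {θ s : ℝ} (hθ₀ : 0 ≤ θ) (hθ₁ : θ ≤ 1) (hs : 0 ≤ s) : θ * f s ≤ f (θ * s) := by
  have := hf.2 (mem_Ici.2 hs) (mem_Ici.2 le_rfl) hθ₀ (sub_nonneg.2 hθ₁) (add_sub_cancel θ 1)
  simp only [smul_eq_mul, mul_zero, add_zero] at this
  nlinarith [mul_nonneg (sub_nonneg.2 hθ₁) h0]

lemma ConcaveOn.map_add_le {f : ℝ → ℝ} (hf : ConcaveOn ℝ (Ici 0) f) (h0 : 0 ≤ f 0)
    {x y : ℝ} (hx : 0 ≤ x) (hy : 0 ≤ y) : f (x + y) ≤ f x + f y := by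
  rcases (add_nonneg hx hy).eq_or_lt with hs | hs
  · obtain ⟨rfl, rfl⟩ : x = 0 ∧ y = 0 := ⟨by linarith, by linarith⟩
    simpa using h0
  have hfx := hf.mul_le_map_mul h0 (div_nonneg hx hs.le)
    (div_le_one_of_le₀ (by linarith) hs.le) hs.le
  have hfy := hf.mul_le_map_mul h0 (div_nonneg hy hs.le)
    (div_le_one_of_le₀ (by linarith) hs.le) hs.le
  rw [div_mul_cancel₀ _ hs.ne'] at hfx hfy
  have hsum : x / (x + y) * f (x + y) + y / (x + y) * f (x + y) = f (x + y) := by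
    field_simp
  linarith

lemma sub_mul_le_sub_of_monotone_increments {u : ℕ → ℝ}
    (hu : Monotone fun j => u (j + 1) - u j) {j m : ℕ} (hjm : j ≤ m) :
    ((m : ℝ) - j) * (u (j + 1) - u j) ≤ u m - u j := by
  induction m, hjm using Nat.le_induction with
  | base => simp
  | succ m hjm ih =>
    have hgap := hu hjm
    push_cast
    linarith

lemma sub_le_sub_mul_of_monotone_increments {u : ℕ → ℝ}
    (hu : Monotone fun j => u (j + 1) - u j) {m j : ℕ} (hmj : m ≤ j) :
    u j - u m ≤ ((j : ℝ) - m) * (u (j + 1) - u j) := by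
  induction j, hmj using Nat.le_induction with
  | base => simp
  | succ j hmj ih =>
    have hgap := hu j.le_succ
    have hmj' : (m : ℝ) ≤ j := mod_cast hmj
    push_cast
    nlinarith

noncomputable section Polygonal

def chord (t : ℕ → ℕ) (j : ℕ) (x : ℝ) : ℝ := j + (x - t j) / ((t (j + 1) : ℝ) - t j)

/-- When the gaps `t (j + 1) - t j` are positive and nondecreasing, this is the piecewise linear
interpolation of the points `(t m, m)`; as an infimum of chords it is concave. -/
def polygonal (t : ℕ → ℕ) (x : ℝ) : ℝ := ⨅ j, chord t j x

variable {t : ℕ → ℕ} (ht : ∀ m, (m + 2) * t m + 1 ≤ t (m + 1))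
include ht

lemma breakpoint_add_one_le_gap (j : ℕ) : (t j : ℝ) + 1 ≤ t (j + 1) - t j := by
  have : ((j + 2) * t j + 1 : ℝ) ≤ t (j + 1) := mod_cast ht j
  nlinarith [(t j).cast_nonneg (α := ℝ)]

lemma one_le_gap (j : ℕ) : (1 : ℝ) ≤ t (j + 1) - t j := by
  linarith [breakpoint_add_one_le_gap ht j, (t j).cast_nonneg (α := ℝ)]

lemma monotone_gap : Monotone fun j => (t (j + 1) : ℝ) - t j := by
  refine monotone_nat_of_le_succ fun j => ?_
  have : ((j + 3) * t (j + 1) + 1 : ℝ) ≤ t (j + 2) := mod_cast ht (j + 1)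
  nlinarith [(t j).cast_nonneg (α := ℝ), (t (j + 1)).cast_nonneg (α := ℝ)]

lemma strictMono_breakpoint : StrictMono t :=
  strictMono_nat_of_lt_succ fun m => by linarith [ht m, Nat.le_mul_of_pos_left (t m) m.succ_pos]

lemma le_chord_breakpoint (j m : ℕ) : (m : ℝ) ≤ chord t j (t m) := by
  have hg := one_le_gap ht j
  rw [chord, ← sub_le_iff_le_add', le_div_iff₀ (by linarith)]
  rcases le_total j m with hjm | hmj
  · exact sub_mul_le_sub_of_monotone_increments (u := (t · : ℕ → ℝ)) (monotone_gap ht) hjm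
  · nlinarith [sub_le_sub_mul_of_monotone_increments (u := (t · : ℕ → ℝ)) (monotone_gap ht) hmj]

lemma bddBelow_range_chord (x : ℝ) : BddBelow (range fun j => chord t j x) := by
  refine ⟨-|x| - 1, forall_mem_range.2 fun j => ?_⟩
  have hg := breakpoint_add_one_le_gap ht j
  have hslope : -|x| - 1 ≤ (x - t j) / ((t (j + 1) : ℝ) - t j) := by
    rw [le_div_iff₀ (by linarith [(t j).cast_nonneg (α := ℝ)])]
    nlinarith [neg_abs_le x, abs_nonneg x, (t j).cast_nonneg (α := ℝ)]
  simp only [chord]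
  linarith [(j.cast_nonneg : (0 : ℝ) ≤ j)]

lemma polygonal_le_chord (j : ℕ) (x : ℝ) : polygonal t x ≤ chord t j x :=
  ciInf_le (bddBelow_range_chord ht x) j

lemma polygonal_breakpoint (m : ℕ) : polygonal t (t m) = m :=
  le_antisymm (by simpa [chord] using polygonal_le_chord ht m (t m))
    (le_ciInf (le_chord_breakpoint ht · m))

lemma polygonal_monotone : Monotone (polygonal t) := fun x y hxy =>
  le_ciInf fun j => (polygonal_le_chord ht j x).trans <| by
    have := one_le_gap ht j
    unfold chord
    gcongr

lemma lipschitzWith_polygonal : LipschitzWith 1 (polygonal t) := by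
  refine LipschitzWith.of_le_add fun x y => ?_
  rw [← sub_le_iff_le_add]
  refine le_ciInf fun j => ?_
  have hg := one_le_gap ht j
  have hslope : chord t j x - chord t j y ≤ dist x y := by
    rw [chord, chord, add_sub_add_left_eq_sub, ← sub_div, sub_sub_sub_cancel_right, Real.dist_eq]
    exact (div_le_self (abs_nonneg _) hg).trans' (by gcongr; exact le_abs_self _)
  linarith [polygonal_le_chord ht j x]

lemma concaveOn_polygonal : ConcaveOn ℝ univ (polygonal t) := by
  refine ⟨convex_univ, fun x _ y _ a b ha hb hab => le_ciInf fun j => ?_⟩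
  have hg := one_le_gap ht j
  have hchord : a * chord t j x + b * chord t j y = chord t j (a * x + b * y) := by
    simp only [chord]
    field_simp
    linear_combination (↑j * (↑(t (j + 1)) - ↑(t j)) - ↑(t j)) * hab
  rw [smul_eq_mul, smul_eq_mul, smul_eq_mul, smul_eq_mul, ← hchord]
  gcongr <;> exact polygonal_le_chord ht j _

lemma tendsto_polygonal_atTop : Tendsto (polygonal t) atTop atTop :=
  (polygonal_monotone ht).tendsto_atTop_atTop fun b =>
    ⟨t ⌈b⌉₊, (polygonal_breakpoint ht _).symm ▸ Nat.le_ceil b⟩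

lemma isUnboundedOn_polygonal : IsUnboundedOn (polygonal t) := fun M =>
  ((eventually_ge_atTop 0).and ((tendsto_polygonal_atTop ht).eventually_gt_atTop M)).exists

/-- With `m = ⌊polygonal t x⌋₊ ≥ c` we have `x < t (m + 1)`, and the growth of `t` gives
`c * x ≤ m * t (m + 1) ≤ t (m + 2)`. -/
lemma eventually_polygonal_mul_le_add_two (c : ℝ) :
    ∀ᶠ x in atTop, polygonal t (c * x) ≤ polygonal t x + 2 := by
  filter_upwards [eventually_ge_atTop 0,
    (tendsto_polygonal_atTop ht).eventually_ge_atTop (⌈c⌉₊ : ℝ)] with x hx hcx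
  set m := ⌊polygonal t x⌋₊
  have hcm : c ≤ m := (Nat.le_ceil c).trans (mod_cast Nat.le_floor hcx)
  have hxt : x < t (m + 1) := by
    by_contra! hle
    have := polygonal_monotone ht hle
    rw [polygonal_breakpoint ht] at this
    push_cast at this
    linarith [Nat.lt_floor_add_one (polygonal t x)]
  have hgrowth : ((m + 3) * t (m + 1) + 1 : ℝ) ≤ t (m + 2) := mod_cast ht (m + 1)
  have hcx_le : c * x ≤ t (m + 2) := by
    nlinarith [mul_le_mul_of_nonneg_right hcm hx, (t (m + 1)).cast_nonneg (α := ℝ),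
      m.cast_nonneg (α := ℝ)]
  calc polygonal t (c * x) ≤ m + 2 := by
        simpa using polygonal_monotone ht hcx_le |>.trans_eq (polygonal_breakpoint ht _)
    _ ≤ polygonal t x + 2 := by
        linarith [Nat.floor_le ((Nat.cast_nonneg _).trans hcx)]

lemma slowlyVaryingOn_polygonal : SlowlyVaryingOn (polygonal t) := by
  intro a ha
  set c := max a a⁻¹
  have hmono := polygonal_monotone ht
  refine tendsto_div_nhds_one_of_abs_sub_le (C := 2) (tendsto_polygonal_atTop ht) ?_
  filter_upwards [eventually_ge_atTop 0, eventually_polygonal_mul_le_add_two ht c,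
    (tendsto_id.const_mul_atTop ha).eventually (eventually_polygonal_mul_le_add_two ht c)]
    with x hx hup hdown
  rw [id] at hdown
  have hax : 0 ≤ a * x := mul_nonneg ha.le hx
  have h₁ : polygonal t (a * x) ≤ polygonal t (c * x) :=
    hmono (mul_le_mul_of_nonneg_right (le_max_left _ _) hx)
  have h₂ : polygonal t x ≤ polygonal t (c * (a * x)) := hmono <| by
    calc x = a⁻¹ * (a * x) := (inv_mul_cancel_left₀ ha.ne' x).symm
      _ ≤ c * (a * x) := mul_le_mul_of_nonneg_right (le_max_right _ _) hax
  exact abs_sub_le_iff.2 ⟨by linarith, by linarith⟩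

lemma not_hasFDensity_zero_polygonal {K : Set ℕ} (hK : ∀ m, t m ≤ countLe K (t (m + 1))) :
    ¬HasFDensity (polygonal t) K 0 := by
  intro hdens
  have hsub := hdens.comp <|
    (strictMono_breakpoint ht).tendsto_atTop.comp (tendsto_add_atTop_nat 1)
  obtain ⟨m, hsmall, hm⟩ :=
    ((hsub.eventually_lt_const one_half_pos).and (eventually_ge_atTop 1)).exists
  have hcount : (m : ℝ) ≤ polygonal t (countLe K (t (m + 1))) :=
    polygonal_breakpoint ht m ▸ polygonal_monotone ht (mod_cast hK m)
  have hm' : (1 : ℝ) ≤ m := mod_cast hm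
  simp only [Function.comp_apply, polygonal_breakpoint ht] at hsmall
  rw [div_lt_iff₀ (by positivity)] at hsmall
  push_cast at hsmall
  linarith

variable (h0 : t 0 = 0)
include h0

lemma polygonal_zero : polygonal t 0 = 0 := by
  simpa [h0] using polygonal_breakpoint ht 0

lemma polygonal_pos {x : ℝ} (hx : 0 < x) : 0 < polygonal t x := by
  have ht₁ : (0 : ℝ) < t 1 := by
    have := breakpoint_add_one_le_gap ht 0
    rw [h0, Nat.cast_zero] at this
    linarith
  rcases le_total (t 1 : ℝ) x with h | h
  · linarith [polygonal_monotone ht h, Nat.cast_one (R := ℝ) ▸ polygonal_breakpoint ht 1]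
  · have := ((concaveOn_polygonal ht).subset (subset_univ _) (convex_Ici 0)).mul_le_map_mul
      (polygonal_zero ht h0).ge (div_nonneg hx.le ht₁.le) ((div_le_one ht₁).2 h) ht₁.le
    rw [polygonal_breakpoint ht, div_mul_cancel₀ _ ht₁.ne'] at this
    push_cast at this
    linarith [div_pos hx ht₁]

lemma isModulus_polygonal : IsModulus (polygonal t) := by
  have hconc := (concaveOn_polygonal ht).subset (subset_univ _) (convex_Ici 0)
  have hzero := polygonal_zero ht h0
  refine ⟨fun x hx => hzero ▸ polygonal_monotone ht hx, fun x hx => ⟨fun hfx => ?_, ?_⟩,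
    fun x y hx hy => hconc.map_add_le hzero.ge hx hy, (polygonal_monotone ht).monotoneOn _,
    (lipschitzWith_polygonal ht).continuous.continuousOn⟩
  · by_contra hne
    exact (polygonal_pos ht h0 (hx.lt_of_ne' hne)).ne' hfx
  · rintro rfl
    exact hzero

end Polygonal

def fastBreakpoints (N : ℕ → ℕ) : ℕ → ℕ
  | 0 => 0
  | m + 1 => max (N (fastBreakpoints N m)) ((m + 2) * fastBreakpoints N m) + 1

lemma Set.Infinite.exists_modulus_not_hasFDensity_zero {K : Set ℕ} (hK : K.Infinite) :
    ∃ f : ℝ → ℝ, IsModulus f ∧ IsUnboundedOn f ∧ ConcaveOn ℝ (Ici 0) f ∧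
      SlowlyVaryingOn f ∧ ¬HasFDensity f K 0 := by
  choose N hN using hK.exists_le_countLe
  set t := fastBreakpoints N
  have ht : ∀ m, (m + 2) * t m + 1 ≤ t (m + 1) := fun m => by
    simp only [t, fastBreakpoints]
    omega
  have hNt : ∀ m, N (t m) ≤ t (m + 1) := fun m => by
    simp only [t, fastBreakpoints]
    omega
  exact ⟨polygonal t, isModulus_polygonal ht rfl, isUnboundedOn_polygonal ht,
    (concaveOn_polygonal ht).subset (subset_univ _) (convex_Ici 0),
    slowlyVaryingOn_polygonal ht,
    not_hasFDensity_zero_polygonal ht fun m => (hN (t m)).trans (countLe_mono K (hNt m))⟩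

theorem stmt4_general {X : Type*} [MetricSpace X]
    (A : Set X) (Aseq : ℕ → Set X) :
    (WijsmanConvTo Aseq A ↔
      (∀ f : ℝ → ℝ, IsModulus f → IsUnboundedOn f → FWijsmanStatConvTo f Aseq A)) ∧
    (WijsmanConvTo Aseq A ↔
      (∀ f : ℝ → ℝ, IsModulus f → IsUnboundedOn f → ConcaveOn ℝ (Set.Ici 0) f →
        SlowlyVaryingOn f → FWijsmanStatConvTo f Aseq A)) := by
  have forward (h : WijsmanConvTo Aseq A) (f : ℝ → ℝ) (hf : IsModulus f)
      (hu : IsUnboundedOn f) : FWijsmanStatConvTo f Aseq A := fun x ε hε =>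
    hasFDensity_zero_of_finite hf hu (wijsmanConvTo_iff_finite.1 h x ε hε)
  have backward (h : ∀ f : ℝ → ℝ, IsModulus f → IsUnboundedOn f → ConcaveOn ℝ (Ici 0) f →
      SlowlyVaryingOn f → FWijsmanStatConvTo f Aseq A) : WijsmanConvTo Aseq A := by
    refine wijsmanConvTo_iff_finite.2 fun x ε hε => ?_
    by_contra hK
    obtain ⟨f, hf, hu, hconc, hslow, hdens⟩ :=
      Set.Infinite.exists_modulus_not_hasFDensity_zero hK
    exact hdens (h f hf hu hconc hslow x ε hε)
  exact ⟨⟨forward, fun h => backward fun f hf hu _ _ => h f hf hu⟩,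
    ⟨fun h f hf hu _ _ => forward h f hf hu, backward⟩⟩

/-- `(A_k)` is Wijsman convergent to `A` iff `[WS^f]-lim A_k = A`
for every unbounded modulus `f`, iff `[WS^f]-lim A_k = A` for every unbounded,
concave, slowly varying modulus `f`. -/
theorem stmt4 {X : Type*} [MetricSpace X]
    (A : Set X) (hA : A.Nonempty) (hAcl : IsClosed A)
    (Aseq : ℕ → Set X) (hAseq : ∀ k, (Aseq k).Nonempty ∧ IsClosed (Aseq k)) :
    (WijsmanConvTo Aseq A ↔
      (∀ f : ℝ → ℝ, IsModulus f → IsUnboundedOn f → FWijsmanStatConvTo f Aseq A)) ∧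
    (WijsmanConvTo Aseq A ↔
      (∀ f : ℝ → ℝ, IsModulus f → IsUnboundedOn f → ConcaveOn ℝ (Set.Ici 0) f →
        SlowlyVaryingOn f → FWijsmanStatConvTo f Aseq A)) :=
  stmt4_general A Aseq
end

section
/- Let (X,ρ) be a bounded metric space, let A ∈ CL(X), let (A_k) be a sequence in CL(X) and let f : [0,∞) → [0,∞) be an unbounded modulus. If [WS^f]-lim A_k = A, then (A_k) is Wijsman Cesàro summable to A. -/
open Filter Metric Set
open scoped Classical

lemma countLe_eq (K : Set ℕ) (n : ℕ) :
    countLe K n = ((Finset.range (n+1)).filter (· ∈ K)).card := by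
  rw [countLe]
  have : {k : ℕ | k ≤ n ∧ k ∈ K} = ↑((Finset.range (n+1)).filter (· ∈ K)) := by
    ext k; simp [Nat.lt_succ_iff]
  rw [this, Nat.card_coe_set_eq, Set.ncard_coe_finset]

lemma mod_pos {f : ℝ → ℝ} (hf : IsModulus f) {x : ℝ} (hx : 0 < x) : 0 < f x := by
  have h0 := hf.1 x hx.le
  rcases h0.lt_or_eq with h | h
  · exact h
  · exact absurd ((hf.2.1 x hx.le).mp h.symm) hx.ne'

lemma mod_nsmul {f : ℝ → ℝ} (hf : IsModulus f) (m : ℕ) {x : ℝ} (hx : 0 ≤ x) :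
    f ((m : ℝ) * x) ≤ m * f x := by
  induction m with
  | zero => simp [(hf.2.1 0 le_rfl).mpr rfl]
  | succ m ih =>
      push_cast
      rw [add_mul, one_mul]
      calc f ((m : ℝ) * x + x) ≤ f ((m : ℝ) * x) + f x :=
            hf.2.2.1 _ _ (by positivity) hx
        _ ≤ m * f x + f x := by linarith
        _ = ((m : ℝ) + 1) * f x := by ring

lemma natDensity_of_fDensity {f : ℝ → ℝ} (hf : IsModulus f) {K : Set ℕ}
    (h : HasFDensity f K 0) : HasNatDensity K 0 := by
  rw [HasNatDensity, Metric.tendsto_atTop]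
  by_contra hcon
  push_neg at hcon
  obtain ⟨ε, hε, hfr⟩ := hcon
  set m := ⌈(1:ℝ)/ε⌉₊ with hm
  have hm1 : 1 ≤ m := Nat.one_le_iff_ne_zero.mpr (by
    simp only [hm, ne_eq, Nat.ceil_eq_zero, not_le]
    positivity)
  have hmε : 1 ≤ (m : ℝ) * ε := by
    have := Nat.le_ceil ((1:ℝ)/ε)
    calc (1:ℝ) = (1/ε) * ε := by field_simp
      _ ≤ m * ε := by apply mul_le_mul_of_nonneg_right this hε.le
  have hsmall : ∀ᶠ n : ℕ in atTop, f (countLe K n : ℝ) / f (n : ℝ) < 1 / m := by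
    have := h.eventually (eventually_lt_nhds (show (0:ℝ) < 1/m by positivity))
    simpa using this
  rw [eventually_atTop] at hsmall
  obtain ⟨N, hN⟩ := hsmall
  obtain ⟨n, hn, hbig⟩ := hfr (max N 1)
  have hn1 : 1 ≤ n := le_trans (le_max_right _ _) hn
  have hnN : N ≤ n := le_trans (le_max_left _ _) hn
  have hnpos : (0:ℝ) < n := by exact_mod_cast hn1
  rw [Real.dist_eq, sub_zero, abs_of_nonneg (by positivity)] at hbig
  have hcount : ε * n ≤ (countLe K n : ℝ) := by
    rw [le_div_iff₀ hnpos] at hbig; linarith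
  have hεn : 0 < ε * n := by positivity
  have h1 : f (ε * n) ≤ f (countLe K n : ℝ) :=
    hf.2.2.2.1 hεn.le (Set.mem_Ici.mpr (Nat.cast_nonneg _)) hcount
  have h2 : f (n : ℝ) ≤ m * f (ε * n) := by
    calc f (n : ℝ) ≤ f ((m : ℝ) * (ε * n)) := by
          apply hf.2.2.2.1 hnpos.le (Set.mem_Ici.mpr (by positivity))
          calc (n:ℝ) = 1 * n := (one_mul _).symm
            _ ≤ (m * ε) * n := by apply mul_le_mul_of_nonneg_right hmε hnpos.le
            _ = m * (ε * n) := by ring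
      _ ≤ m * f (ε * n) := mod_nsmul hf m hεn.le
  have hfεn : 0 < f (ε * n) := mod_pos hf hεn
  have hfn : 0 < f (n : ℝ) := mod_pos hf hnpos
  have := hN n hnN
  have hge : 1 / (m:ℝ) ≤ f (countLe K n : ℝ) / f (n : ℝ) := by
    rw [div_le_div_iff₀ (by positivity) hfn]
    calc 1 * f (n:ℝ) ≤ m * f (ε * n) := by linarith
      _ ≤ f (countLe K n : ℝ) * m := by
          rw [mul_comm]
          exact mul_le_mul_of_nonneg_right h1 (by positivity)
  linarith

/-- In a bounded metric space, `[WS^f]-lim A_k = A` implies that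
`(A_k)` is Wijsman Cesàro summable to `A`. -/
theorem stmt7 {X : Type*} [MetricSpace X]
    (hXbd : Bornology.IsBounded (Set.univ : Set X))
    (f : ℝ → ℝ) (hf : IsModulus f) (hfu : IsUnboundedOn f)
    (A : Set X) (hA : A.Nonempty) (hAcl : IsClosed A)
    (Aseq : ℕ → Set X) (hAseq : ∀ k, (Aseq k).Nonempty ∧ IsClosed (Aseq k))
    (h : FWijsmanStatConvTo f Aseq A) :
    WijsmanCesaroTo Aseq A := by
  intro x
  set L := infDist x A with hLdef
  set a : ℕ → ℝ := fun k => infDist x (Aseq k) with hadef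
  set D : ℝ := Metric.diam (Set.univ : Set X) with hDdef
  have hD0 : 0 ≤ D := Metric.diam_nonneg
  have hbd : ∀ S : Set X, S.Nonempty → infDist x S ≤ D := by
    intro S hS
    obtain ⟨y, hy⟩ := hS
    exact le_trans (infDist_le_dist_of_mem hy)
      (Metric.dist_le_diam_of_mem hXbd (Set.mem_univ _) (Set.mem_univ _))
  have ha0 : ∀ k, 0 ≤ a k := fun k => infDist_nonneg
  have haD : ∀ k, a k ≤ D := fun k => hbd _ (hAseq k).1
  have hL0 : 0 ≤ L := infDist_nonneg
  have hLD : L ≤ D := hbd _ hA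
  have habs : ∀ k, |a k - L| ≤ D := by
    intro k
    rw [abs_sub_le_iff]
    constructor <;> linarith [ha0 k, haD k, hL0, hLD]
  -- statistical convergence w.r.t. natural density
  have hstat : ∀ ε : ℝ, 0 < ε → HasNatDensity {k : ℕ | ε ≤ |a k - L|} 0 :=
    fun ε hε => natDensity_of_fDensity hf (h x ε hε)
  -- the averaged absolute deviations tend to zero
  have hzero : Tendsto (fun n : ℕ => (∑ k ∈ Finset.range n, |a k - L|) / (n : ℝ))
      atTop (nhds 0) := by
    rw [Metric.tendsto_atTop]
    intro ε hε
    set δ : ℝ := ε / 2 with hδdef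
    have hδ : 0 < δ := by positivity
    set K : Set ℕ := {k : ℕ | δ ≤ |a k - L|} with hKdef
    have hKd := hstat δ hδ
    have hev : ∀ᶠ n : ℕ in atTop, (countLe K n : ℝ) / (n : ℝ) < ε / (2 * (D + 1)) := by
      have := hKd.eventually (eventually_lt_nhds (show (0:ℝ) < ε / (2 * (D+1)) by positivity))
      simpa using this
    rw [eventually_atTop] at hev
    obtain ⟨N, hN⟩ := hev
    refine ⟨max N 1, fun n hn => ?_⟩
    have hn1 : 1 ≤ n := le_trans (le_max_right _ _) hn
    have hnN : N ≤ n := le_trans (le_max_left _ _) hn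
    have hnpos : (0:ℝ) < n := by exact_mod_cast hn1
    have hsum : ∑ k ∈ Finset.range n, |a k - L| ≤ D * (countLe K n) + δ * n := by
      rw [← Finset.sum_filter_add_sum_filter_not (Finset.range n) (· ∈ K)]
      have h1 : ∑ k ∈ (Finset.range n).filter (· ∈ K), |a k - L| ≤ D * (countLe K n) := by
        calc ∑ k ∈ (Finset.range n).filter (· ∈ K), |a k - L|
            ≤ ∑ _k ∈ (Finset.range n).filter (· ∈ K), D :=
              Finset.sum_le_sum (fun k _ => habs k)
          _ = ((Finset.range n).filter (· ∈ K)).card * D := by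
              rw [Finset.sum_const, nsmul_eq_mul]
          _ ≤ (countLe K n) * D := by
              apply mul_le_mul_of_nonneg_right _ hD0
              have hsub : (Finset.range n).filter (· ∈ K) ⊆
                  (Finset.range (n+1)).filter (· ∈ K) :=
                Finset.filter_subset_filter _ (Finset.range_subset_range.mpr (Nat.le_succ n))
              exact_mod_cast countLe_eq K n ▸ Finset.card_le_card hsub
          _ = D * (countLe K n) := mul_comm _ _
      have h2 : ∑ k ∈ (Finset.range n).filter (fun k => ¬ k ∈ K), |a k - L| ≤ δ * n := by
        calc ∑ k ∈ (Finset.range n).filter (fun k => ¬ k ∈ K), |a k - L|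
            ≤ ∑ _k ∈ (Finset.range n).filter (fun k => ¬ k ∈ K), δ := by
              apply Finset.sum_le_sum
              intro k hk
              have : ¬ δ ≤ |a k - L| := by
                have := (Finset.mem_filter.mp hk).2
                simpa [hKdef] using this
              linarith
          _ = ((Finset.range n).filter (fun k => ¬ k ∈ K)).card * δ := by
              rw [Finset.sum_const, nsmul_eq_mul]
          _ ≤ n * δ := by
              apply mul_le_mul_of_nonneg_right _ hδ.le
              exact_mod_cast le_trans (Finset.card_filter_le _ _) (by simp)
          _ = δ * n := mul_comm _ _
      linarith
    have hc : (countLe K n : ℝ) / n < ε / (2 * (D + 1)) := hN n hnN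
    have hsumnn : 0 ≤ ∑ k ∈ Finset.range n, |a k - L| :=
      Finset.sum_nonneg (fun k _ => abs_nonneg _)
    rw [Real.dist_eq, sub_zero, abs_of_nonneg (by positivity)]
    calc (∑ k ∈ Finset.range n, |a k - L|) / n
        ≤ (D * (countLe K n) + δ * n) / n := by gcongr
      _ = D * ((countLe K n : ℝ) / n) + δ := by field_simp
      _ ≤ D * (ε / (2 * (D + 1))) + δ := by gcongr
      _ < ε := by
          have ht : 0 < ε / (2 * (D + 1)) := by positivity
          have heq : (D + 1) * (ε / (2 * (D + 1))) = ε / 2 := by field_simp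
          have : D * (ε / (2 * (D + 1))) < ε / 2 := by nlinarith
          rw [hδdef] at *; linarith
  -- conclude Cesàro convergence
  have hkey : ∀ᶠ n : ℕ in atTop,
      ‖(∑ k ∈ Finset.range n, a k) / (n : ℝ) - L‖ ≤
        (∑ k ∈ Finset.range n, |a k - L|) / (n : ℝ) := by
    filter_upwards [eventually_ge_atTop 1] with n hn1
    have hnpos : (0:ℝ) < n := by exact_mod_cast hn1
    have : (∑ k ∈ Finset.range n, a k) / (n : ℝ) - L
        = (∑ k ∈ Finset.range n, (a k - L)) / (n : ℝ) := by
      rw [Finset.sum_sub_distrib, Finset.sum_const, Finset.card_range, nsmul_eq_mul]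
      field_simp
    rw [this, Real.norm_eq_abs, abs_div, abs_of_nonneg hnpos.le]
    gcongr
    exact Finset.abs_sum_le_sum_abs _ _
  have hconv : Tendsto (fun n : ℕ => (∑ k ∈ Finset.range n, a k) / (n : ℝ) - L)
      atTop (nhds 0) := squeeze_zero_norm' hkey hzero
  have := hconv.add_const L
  simpa using this
end

section
/- Let f(x) = log(1 + x) and let K = { 2n : n ∈ ℕ } be the set of even natural numbers. Then d^f(K) = 1 and d^f(ℕ − K) = 1. In particular, for an unbounded modulus f, the implication d^f(ℕ − K) = 1 ⇒ d^f(K) = 0 does not hold in general. -/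
/-!
Both the even numbers and their complement contain at least `⌊n/2⌋` of the numbers `0, …, n`,
so `log (1 + |K ∩ [0, n]|)` stays within `log 2` of `log (1 + n)`. Dividing by
`log (1 + n) → ∞` gives `f`-density `1` for both sets, and by uniqueness of limits the
even numbers cannot also have `f`-density `0`.
-/

open Filter Metric Set
open scoped Classical

open Real

lemma card_le_countLe {K : Set ℕ} {n : ℕ} (s : Finset ℕ) (hs : ∀ k ∈ s, k ≤ n ∧ k ∈ K) :
    s.card ≤ countLe K n := by
  rw [countLe, Nat.card_coe_set_eq, ← Set.ncard_coe_finset]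
  exact Set.ncard_le_ncard hs ((Set.finite_Iic n).subset fun k hk => hk.1)

lemma countLe_le_succ (K : Set ℕ) (n : ℕ) : countLe K n ≤ n + 1 := by
  rw [countLe, Nat.card_coe_set_eq, ← Nat.card_Iic, ← Set.ncard_coe_finset, Finset.coe_Iic]
  exact Set.ncard_le_ncard (fun k hk => hk.1) (Set.finite_Iic n)

lemma tendsto_log_div_log_of_le_of_le {α : Type*} {l : Filter α} {u v : α → ℝ} {a b : ℝ}
    (ha : 0 < a) (hb : 0 < b) (hv : Tendsto v l atTop)
    (hlo : ∀ᶠ x in l, a * v x ≤ u x) (hhi : ∀ᶠ x in l, u x ≤ b * v x) :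
    Tendsto (fun x => log (u x) / log (v x)) l (nhds 1) := by
  have hlogv : Tendsto (fun x => log (v x)) l atTop := tendsto_log_atTop.comp hv
  have hbound (c : ℝ) : Tendsto (fun x => 1 + log c / log (v x)) l (nhds 1) := by
    simpa using tendsto_const_nhds.add (tendsto_const_nhds.div_atTop hlogv)
  refine tendsto_of_tendsto_of_tendsto_of_le_of_le' (hbound a) (hbound b) ?_ ?_
  all_goals
    filter_upwards [hlo, hhi, hv.eventually_gt_atTop 1] with x hxlo hxhi hx1
    have hlog : 0 < log (v x) := log_pos hx1
    rw [add_div' _ _ _ hlog.ne', div_le_div_iff_of_pos_right hlog, one_mul, add_comm]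
  · rw [← log_mul ha.ne' (by positivity)]
    exact log_le_log (by positivity) hxlo
  · rw [← log_mul hb.ne' (by positivity)]
    exact log_le_log (by linarith [mul_pos ha (by linarith : 0 < v x)]) hxhi

lemma hasFDensity_log_one_add_of_div_two_le_countLe {K : Set ℕ}
    (hK : ∀ n, n / 2 ≤ countLe K n) : HasFDensity (fun x => log (1 + x)) K 1 := by
  refine tendsto_log_div_log_of_le_of_le (a := 1 / 2) (b := 2) (by norm_num) (by norm_num)
    (tendsto_atTop_add_const_left _ 1 tendsto_natCast_atTop_atTop)
    (Eventually.of_forall fun n => ?_) (Eventually.of_forall fun n => ?_)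
  · have hn : (n : ℝ) ≤ 2 * (n / 2 : ℕ) + 1 := by exact_mod_cast (by omega : n ≤ 2 * (n / 2) + 1)
    have hc : ((n / 2 : ℕ) : ℝ) ≤ countLe K n := by exact_mod_cast hK n
    linarith
  · have hc : (countLe K n : ℝ) ≤ n + 1 := by exact_mod_cast countLe_le_succ K n
    linarith [n.cast_nonneg (α := ℝ)]

lemma div_two_le_countLe_even (n : ℕ) :
    n / 2 ≤ countLe {k : ℕ | ∃ m : ℕ, 0 < m ∧ k = 2 * m} n := by
  have h := card_le_countLe (K := {k : ℕ | ∃ m : ℕ, 0 < m ∧ k = 2 * m}) (n := n)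
    ((Finset.Icc 1 (n / 2)).image (2 * ·)) (by
      simp only [Finset.mem_image, Finset.mem_Icc]
      rintro _ ⟨m, ⟨hm, hmn⟩, rfl⟩
      exact ⟨by omega, m, hm, rfl⟩)
  rwa [Finset.card_image_of_injective _ (fun a b h => by omega), Nat.card_Icc,
    Nat.add_sub_cancel] at h

lemma div_two_le_countLe_odd (n : ℕ) :
    n / 2 ≤ countLe {k : ℕ | ∃ m : ℕ, 0 < m ∧ k = 2 * m}ᶜ n := by
  have h := card_le_countLe (K := {k : ℕ | ∃ m : ℕ, 0 < m ∧ k = 2 * m}ᶜ) (n := n)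
    ((Finset.range (n / 2)).image (2 * · + 1)) (by
      simp only [Finset.mem_image, Finset.mem_range]
      rintro _ ⟨m, hm, rfl⟩
      exact ⟨by omega, by rintro ⟨m', -, h⟩; omega⟩)
  rwa [Finset.card_image_of_injective _ (fun a b h => by omega), Finset.card_range] at h

/-- For `f(x) = log(1+x)` and `K` the set of even (positive) natural
numbers, `d^f(K) = 1` and `d^f(ℕ − K) = 1`; in particular `d^f(K) ≠ 0`, so
`d^f(ℕ − K) = 1` does not imply `d^f(K) = 0`. -/
theorem stmt14 :
    HasFDensity (fun x : ℝ => Real.log (1 + x)) {k : ℕ | ∃ m : ℕ, 0 < m ∧ k = 2 * m} 1 ∧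
    HasFDensity (fun x : ℝ => Real.log (1 + x)) {k : ℕ | ∃ m : ℕ, 0 < m ∧ k = 2 * m}ᶜ 1 ∧
    ¬ HasFDensity (fun x : ℝ => Real.log (1 + x)) {k : ℕ | ∃ m : ℕ, 0 < m ∧ k = 2 * m} 0 := by
  have hEven := hasFDensity_log_one_add_of_div_two_le_countLe div_two_le_countLe_even
  refine ⟨hEven, hasFDensity_log_one_add_of_div_two_le_countLe div_two_le_countLe_odd, ?_⟩
  exact fun hZero => one_ne_zero (tendsto_nhds_unique hEven hZero)
end
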